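/- Let 0 < ρ < 1 and let α ∈ (0,1) be the unique solution of x^x (1−x)^{1−x} = ρ^x. Then H_N/N → α in probability as N → ∞; that is, for every ε > 0, ∑_{k ∈ {1,…,N}, |k/N − α| ≥ ε} P(H_N = k) → 0 as N → ∞. -/

import Mathlib

open Finset Filter Real Topology

/-- `r_{ρ,n}(i) = ρ^{-i} * C(n-1, i)^{-1}`. -/
noncomputable def rfun (ρ : ℝ) (n i : ℕ) : ℝ := (ρ ^ i * (Nat.choose (n - 1) i : ℝ))⁻¹

/-- `P(H_N ≥ k)` for `k = 1,…,N`, and `0` for `k > N`. -/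
noncomputable def tailP (ρ : ℝ) (N k : ℕ) : ℝ :=
  if k ≤ N then (∑ i ∈ Finset.range k, rfun ρ N i)⁻¹ else 0

/-- `P(H_N = k) = P(H_N ≥ k) − P(H_N ≥ k+1)`. -/
noncomputable def pmfP (ρ : ℝ) (N k : ℕ) : ℝ := tailP ρ N k - tailP ρ N (k + 1)

/-- `E(H_N) = ∑_{k=1}^N P(H_N ≥ k)`. -/
noncomputable def EH (ρ : ℝ) (N : ℕ) : ℝ := ∑ k ∈ Finset.Icc 1 N, tailP ρ N k

/-- `Var(H_N) = ∑_{k=1}^N (k − E(H_N))² P(H_N = k)`. -/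
noncomputable def VarH (ρ : ℝ) (N : ℕ) : ℝ :=
  ∑ k ∈ Finset.Icc 1 N, ((k : ℝ) - EH ρ N) ^ 2 * pmfP ρ N k

/-- `P(H_N ≤ t)` for a real threshold `t`. -/
noncomputable def cdfP (ρ : ℝ) (N : ℕ) (t : ℝ) : ℝ :=
  ∑ k ∈ (Finset.Icc 1 N).filter (fun k : ℕ => (k : ℝ) ≤ t), pmfP ρ N k


/-!
With `n = N - 1` we have `P(H_N ≥ k) = (∑_{i<k} r i)⁻¹` where `r i = (ρ ^ i * C(n, i))⁻¹`.
Since `C(n, j)` equals `exp (n * binEntropy (j / n))` up to a factor `n + 1`, `r j` is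
`exp (-n f (j / n))` up to that factor, where `f x = binEntropy x + x * log ρ` is strictly
concave and vanishes at `0` and at `α`; so `f > 0` on `(0, α)` and `f` decreases below `0` on
`(α, 1]`. The lower tail `P(H_N ≤ (α - ε) N) = 1 - (∑_{i ≤ (α - ε) N} r i)⁻¹` is at most
`∑_{1 ≤ i ≤ (α - ε) N} r i`; for `i ≤ δ n` these terms decrease geometrically from
`r 1 = (ρ n)⁻¹`, and the remaining ones are `O(n e^{-c n})`. The upper tail is at most
`(r j)⁻¹` for a single `j ≈ (α + ε) N`, which is exponentially small.
-/

namespace Nat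

-- the `j`-th term of the binomial expansion of `n ^ n = (k + (n - k)) ^ n`
def binomTerm (n k j : ℕ) : ℕ := n.choose j * k ^ j * (n - k) ^ (n - j)

variable {n k j : ℕ}

lemma sum_binomTerm (hk : k ≤ n) : ∑ j ∈ range (n + 1), binomTerm n k j = n ^ n := by
  rw [← Nat.add_sub_cancel' hk, add_pow, Nat.add_sub_cancel' hk]
  exact sum_congr rfl fun j _ => by rw [binomTerm, Nat.cast_id]; ring

lemma binomTerm_le_succ (hjk : j < k) (hkn : k ≤ n) : binomTerm n k j ≤ binomTerm n k (j + 1) := by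
  obtain ⟨m, hm⟩ : ∃ m, n - j = m + 1 := ⟨n - j - 1, by omega⟩
  have hm' : n - (j + 1) = m := by omega
  refine Nat.le_of_mul_le_mul_right ?_ j.succ_pos
  calc binomTerm n k j * (j + 1)
      = n.choose j * k ^ j * (n - k) ^ m * ((n - k) * (j + 1)) := by rw [binomTerm, hm]; ring
    _ ≤ n.choose j * k ^ j * (n - k) ^ m * ((n - j) * k) :=
        Nat.mul_le_mul_left _ (Nat.mul_le_mul (by omega) hjk)
    _ = n.choose (j + 1) * (j + 1) * (k ^ (j + 1) * (n - k) ^ m) := by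
        rw [choose_succ_right_eq]; ring
    _ = binomTerm n k (j + 1) * (j + 1) := by rw [binomTerm, hm']; ring

lemma binomTerm_succ_le (hkj : k ≤ j) (hjn : j < n) : binomTerm n k (j + 1) ≤ binomTerm n k j := by
  obtain ⟨m, hm⟩ : ∃ m, n - j = m + 1 := ⟨n - j - 1, by omega⟩
  have hm' : n - (j + 1) = m := by omega
  refine Nat.le_of_mul_le_mul_right ?_ j.succ_pos
  calc binomTerm n k (j + 1) * (j + 1)
      = n.choose (j + 1) * (j + 1) * (k ^ (j + 1) * (n - k) ^ m) := by rw [binomTerm, hm']; ring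
    _ = n.choose j * k ^ j * (n - k) ^ m * ((n - j) * k) := by rw [choose_succ_right_eq]; ring
    _ ≤ n.choose j * k ^ j * (n - k) ^ m * ((n - k) * (j + 1)) :=
        Nat.mul_le_mul_left _ (Nat.mul_le_mul (by omega) (by omega))
    _ = binomTerm n k j * (j + 1) := by rw [binomTerm, hm]; ring

lemma binomTerm_le_binomTerm_self (hkn : k ≤ n) (hjn : j ≤ n) :
    binomTerm n k j ≤ binomTerm n k k := by
  rcases le_total j k with hjk | hkj
  · refine monotoneOn_of_le_succ Set.ordConnected_Iic (fun i _ _ hi => ?_) (Set.mem_Iic.2 hjk)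
      (Set.mem_Iic.2 le_rfl) hjk
    rw [Order.succ_eq_add_one] at hi ⊢
    exact binomTerm_le_succ (Set.mem_Iic.1 hi) hkn
  · refine antitoneOn_of_succ_le Set.ordConnected_Icc (fun i _ hi hi' => ?_) ⟨le_rfl, hkn⟩
      ⟨hkj, hjn⟩ hkj
    rw [Order.succ_eq_add_one] at hi' ⊢
    exact binomTerm_succ_le hi.1 (by simpa using hi'.2)

lemma binomTerm_self_le_pow_self (hk : k ≤ n) : binomTerm n k k ≤ n ^ n :=
  sum_binomTerm hk ▸ single_le_sum (fun _ _ => Nat.zero_le _) (mem_range.2 (by omega))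

lemma pow_self_le_succ_mul_binomTerm_self (hk : k ≤ n) : n ^ n ≤ (n + 1) * binomTerm n k k := by
  rw [← sum_binomTerm hk]
  simpa using sum_le_card_nsmul (range (n + 1)) _ _ fun j hj =>
    binomTerm_le_binomTerm_self hk (Nat.lt_succ_iff.1 (mem_range.1 hj))

end Nat

lemma Real.exp_nat_mul_log {x : ℝ} {k : ℕ} (h : 0 < x ∨ k = 0) : exp (k * log x) = x ^ k := by
  rcases h with hx | rfl
  · rw [← log_pow, exp_log (pow_pos hx k)]
  · simp

lemma Real.exp_mul_binEntropy {n j : ℕ} (hj : j ≤ n) :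
    exp (n * binEntropy (j / n)) = (n : ℝ) ^ n / ((j : ℝ) ^ j * ((n - j : ℕ) : ℝ) ^ (n - j)) := by
  rcases Nat.eq_zero_or_pos n with rfl | hn
  · obtain rfl : j = 0 := by omega
    simp
  have hn' : (n : ℝ) ≠ 0 := by positivity
  have hsub : ((n - j : ℕ) : ℝ) = n - j := Nat.cast_sub hj
  have hlog : n * binEntropy (j / n) = j * log (n / j) + (n - j : ℕ) * log (n / (n - j : ℕ)) := by
    rw [binEntropy, inv_div, hsub, one_sub_div hn', inv_div]
    field_simp
  have hpos (m : ℕ) : 0 < (n / m : ℝ) ∨ m = 0 := by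
    rcases Nat.eq_zero_or_pos m with h | h
    · exact .inr h
    · exact .inl (by positivity)
  rw [hlog, exp_add, exp_nat_mul_log (hpos j), exp_nat_mul_log (hpos _), div_pow, div_pow,
    div_mul_div_comm, ← pow_add, Nat.add_sub_cancel' hj]

lemma Nat.choose_le_exp_mul_binEntropy {n j : ℕ} (hj : j ≤ n) :
    (n.choose j : ℝ) ≤ exp (n * binEntropy (j / n)) := by
  have hT : ((n.binomTerm j j : ℕ) : ℝ) ≤ (n ^ n : ℕ) := by
    exact_mod_cast Nat.binomTerm_self_le_pow_self hj
  have hpos : (0 : ℝ) < (j : ℝ) ^ j * ((n - j : ℕ) : ℝ) ^ (n - j) := by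
    exact_mod_cast Nat.mul_pos Nat.pow_self_pos Nat.pow_self_pos
  rw [Real.exp_mul_binEntropy hj, le_div_iff₀ hpos]
  simpa [Nat.binomTerm, Nat.cast_sub hj, mul_assoc] using hT

lemma Nat.exp_mul_binEntropy_le_succ_mul_choose {n j : ℕ} (hj : j ≤ n) :
    exp (n * binEntropy (j / n)) ≤ (n + 1) * n.choose j := by
  have hT : ((n ^ n : ℕ) : ℝ) ≤ ((n + 1) * n.binomTerm j j : ℕ) := by
    exact_mod_cast Nat.pow_self_le_succ_mul_binomTerm_self hj
  have hpos : (0 : ℝ) < (j : ℝ) ^ j * ((n - j : ℕ) : ℝ) ^ (n - j) := by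
    exact_mod_cast Nat.mul_pos Nat.pow_self_pos Nat.pow_self_pos
  rw [Real.exp_mul_binEntropy hj, div_le_iff₀ hpos]
  simpa [Nat.binomTerm, Nat.cast_sub hj, mul_assoc] using hT

/-- `ρ ^ j * C(n, j) = exp (n * tiltedBinEntropy ρ (j / n) + O(log n))`. -/
noncomputable def tiltedBinEntropy (ρ x : ℝ) : ℝ := binEntropy x + x * log ρ

section TiltedBinEntropy

variable {ρ α x : ℝ}

lemma strictConcaveOn_tiltedBinEntropy (ρ : ℝ) :
    StrictConcaveOn ℝ (Set.Icc 0 1) (tiltedBinEntropy ρ) :=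
  strictConcave_binEntropy.add_concaveOn ((LinearMap.mulRight ℝ (log ρ)).concaveOn (convex_Icc 0 1))

@[simp]
lemma tiltedBinEntropy_zero (ρ : ℝ) : tiltedBinEntropy ρ 0 = 0 := by simp [tiltedBinEntropy]

lemma tiltedBinEntropy_eq_zero_of_rpow (hρ : 0 < ρ) (hx : x ∈ Set.Ioo 0 1)
    (h : x ^ x * (1 - x) ^ (1 - x) = ρ ^ x) : tiltedBinEntropy ρ x = 0 := by
  have hx' : 0 < 1 - x := by linarith [hx.2]
  have := congrArg log h
  rw [log_mul (rpow_pos_of_pos hx.1 _).ne' (rpow_pos_of_pos hx' _).ne', log_rpow hx.1,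
    log_rpow hx', log_rpow hρ] at this
  rw [tiltedBinEntropy, binEntropy, log_inv, log_inv]
  linarith

lemma tiltedBinEntropy_pos (hα : α ∈ Set.Ioo 0 1) (hT : tiltedBinEntropy ρ α = 0) (hx : 0 < x)
    (hxα : x < α) : 0 < tiltedBinEntropy ρ x := by
  have := (strictConcaveOn_tiltedBinEntropy ρ).lt_on_openSegment (x := 0) (y := α)
    ⟨le_rfl, zero_le_one⟩ (Set.Ioo_subset_Icc_self hα) hα.1.ne
    (by rw [openSegment_eq_Ioo hα.1]; exact ⟨hx, hxα⟩)
  simpa [hT] using this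

lemma strictAntiOn_tiltedBinEntropy (hα : α ∈ Set.Ioo 0 1) (hT : tiltedBinEntropy ρ α = 0) :
    StrictAntiOn (tiltedBinEntropy ρ) (Set.Icc α 1) := by
  have hf := strictConcaveOn_tiltedBinEntropy ρ
  have hα' : α ∈ Set.Icc (0 : ℝ) 1 := Set.Ioo_subset_Icc_self hα
  have hneg : ∀ y ∈ Set.Ioc α 1, tiltedBinEntropy ρ y < 0 := fun y hy => by
    have := hf.slope_anti_adjacent ⟨le_rfl, zero_le_one⟩ ⟨hα.1.le.trans hy.1.le, hy.2⟩ hα.1 hy.1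
    rwa [hT, tiltedBinEntropy_zero, sub_self, zero_div, sub_zero, div_lt_iff₀ (sub_pos.2 hy.1),
      zero_mul] at this
  intro w hw y hy hwy
  rcases hw.1.eq_or_lt with rfl | hαw
  · exact hT ▸ hneg y ⟨hwy, hy.2⟩
  have hslope := hf.slope_anti_adjacent hα' ⟨hα.1.le.trans hy.1, hy.2⟩ hαw hwy
  rw [hT, sub_zero] at hslope
  have hw_neg : tiltedBinEntropy ρ w / (w - α) < 0 :=
    div_neg_of_neg_of_pos (hneg w ⟨hαw, hw.2⟩) (sub_pos.2 hαw)
  have := hslope.trans hw_neg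
  rwa [div_lt_iff₀ (sub_pos.2 hwy), zero_mul, sub_neg] at this

end TiltedBinEntropy

lemma sum_range_le_two_mul_of_le_half {f : ℕ → ℝ} {m : ℕ} (hf₀ : ∀ i, 0 ≤ f i)
    (hf : ∀ i, i + 1 < m → f (i + 1) ≤ f i / 2) : ∑ i ∈ range m, f i ≤ 2 * f 0 := by
  cases m with
  | zero => simpa using hf₀ 0
  | succ m =>
    have hhalf : ∑ i ∈ range m, f (i + 1) ≤ (∑ i ∈ range m, f i) / 2 := by
      rw [sum_div]
      exact sum_le_sum fun i hi => hf i (by simp at hi; omega)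
    have hsub : ∑ i ∈ range m, f i ≤ ∑ i ∈ range (m + 1), f i :=
      sum_le_sum_of_subset_of_nonneg (range_subset_range.2 m.le_succ) fun i _ _ => hf₀ i
    rw [sum_range_succ'] at hsub ⊢
    linarith

lemma tendsto_mul_succ_mul_exp_neg {c : ℝ} (hc : 0 < c) :
    Tendsto (fun n : ℕ => (n : ℝ) * ((n + 1) * exp (-(c * n)))) atTop (𝓝 0) := by
  have hK : exp (-c) < 1 := exp_lt_one_iff.2 (neg_lt_zero.2 hc)
  have h2 := tendsto_pow_const_mul_const_pow_of_lt_one 2 (exp_pos _).le hK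
  have h1 := tendsto_pow_const_mul_const_pow_of_lt_one 1 (exp_pos _).le hK
  refine ((h2.add h1).congr fun n => ?_).trans (by rw [add_zero])
  rw [← exp_nat_mul]
  ring_nf


section Height

variable {ρ α : ℝ} {n N i j k : ℕ}

lemma rfun_succ (ρ : ℝ) (n i : ℕ) : rfun ρ (n + 1) i = (ρ ^ i * n.choose i)⁻¹ := by
  simp [rfun]

lemma rfun_nonneg (hρ : 0 ≤ ρ) (N i : ℕ) : 0 ≤ rfun ρ N i := by
  unfold rfun; positivity

lemma rfun_zero (ρ : ℝ) (N : ℕ) : rfun ρ N 0 = 1 := by simp [rfun]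

lemma rfun_succ_le_half (hρ : 0 < ρ) (h : 2 * (i + 1) ≤ ρ * (n - i)) :
    rfun ρ (n + 1) (i + 1) ≤ rfun ρ (n + 1) i / 2 := by
  have hin : i < n := by
    have : (i : ℝ) < n := by nlinarith
    exact_mod_cast this
  have hC : (0 : ℝ) < n.choose i := by exact_mod_cast Nat.choose_pos hin.le
  have hrec : (n.choose (i + 1) : ℝ) * (i + 1) = n.choose i * (n - i) := by
    rw [← Nat.cast_sub hin.le]
    exact_mod_cast Nat.choose_succ_right_eq n i
  have hstep : 2 * (ρ ^ i * n.choose i) ≤ ρ ^ (i + 1) * n.choose (i + 1) := by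
    refine le_of_mul_le_mul_right ?_ (by positivity : (0 : ℝ) < i + 1)
    calc 2 * (ρ ^ i * n.choose i) * (i + 1) = ρ ^ i * n.choose i * (2 * (i + 1)) := by ring
      _ ≤ ρ ^ i * n.choose i * (ρ * (n - i)) := by gcongr
      _ = ρ ^ (i + 1) * n.choose (i + 1) * (i + 1) := by
          rw [pow_succ]; linear_combination (-(ρ ^ i * ρ)) * hrec
  rw [rfun_succ, rfun_succ, div_eq_mul_inv, ← mul_inv]
  exact inv_anti₀ (by positivity) (by linarith)

lemma exp_mul_tiltedBinEntropy (hρ : 0 < ρ) (hj : j ≤ n) :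
    exp (n * tiltedBinEntropy ρ (j / n)) = exp (n * binEntropy (j / n)) * ρ ^ j := by
  have hnj : (n : ℝ) * (j / n) = j := by
    rcases Nat.eq_zero_or_pos n with rfl | hn
    · simp [Nat.le_zero.1 hj]
    · field_simp
  rw [tiltedBinEntropy, mul_add, exp_add, ← mul_assoc, hnj, exp_nat_mul_log (.inl hρ)]

lemma exp_neg_le_rfun (hρ : 0 < ρ) (hj : j ≤ n) :
    exp (-(n * tiltedBinEntropy ρ (j / n))) ≤ rfun ρ (n + 1) j := by
  have hC : (0 : ℝ) < n.choose j := by exact_mod_cast Nat.choose_pos hj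
  rw [exp_neg, exp_mul_tiltedBinEntropy hρ hj, rfun_succ, mul_comm (ρ ^ j)]
  exact inv_anti₀ (by positivity)
    (mul_le_mul_of_nonneg_right (Nat.choose_le_exp_mul_binEntropy hj) (by positivity))

lemma rfun_le_succ_mul_exp_neg (hρ : 0 < ρ) (hj : j ≤ n) :
    rfun ρ (n + 1) j ≤ (n + 1) * exp (-(n * tiltedBinEntropy ρ (j / n))) := by
  have hC : (0 : ℝ) < n.choose j := by exact_mod_cast Nat.choose_pos hj
  have hle := mul_le_mul_of_nonneg_left (Nat.exp_mul_binEntropy_le_succ_mul_choose hj)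
    (by positivity : (0 : ℝ) ≤ ρ ^ j)
  rw [exp_neg, exp_mul_tiltedBinEntropy hρ hj, rfun_succ, ← div_eq_mul_inv,
    le_div_iff₀ (by positivity)]
  calc (ρ ^ j * n.choose j)⁻¹ * (exp (n * binEntropy (j / n)) * ρ ^ j)
      = (ρ ^ j * n.choose j)⁻¹ * (ρ ^ j * exp (n * binEntropy (j / n))) := by ring
    _ ≤ (ρ ^ j * n.choose j)⁻¹ * (ρ ^ j * ((n + 1) * n.choose j)) :=
        mul_le_mul_of_nonneg_left hle (by positivity)
    _ = n + 1 := by field_simp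

lemma tailP_of_le (hk : k ≤ N) : tailP ρ N k = (∑ i ∈ range k, rfun ρ N i)⁻¹ := if_pos hk

lemma tailP_of_lt (hk : N < k) : tailP ρ N k = 0 := if_neg (by omega)

lemma tailP_nonneg (hρ : 0 ≤ ρ) (N k : ℕ) : 0 ≤ tailP ρ N k := by
  unfold tailP
  split_ifs
  exacts [inv_nonneg.2 (sum_nonneg fun i _ => rfun_nonneg hρ N i), le_rfl]

lemma sum_range_succ_rfun (ρ : ℝ) (N k : ℕ) :
    ∑ i ∈ range (k + 1), rfun ρ N i = 1 + ∑ i ∈ range k, rfun ρ N (i + 1) := by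
  rw [sum_range_succ', rfun_zero, add_comm]

lemma tailP_one (hN : 1 ≤ N) : tailP ρ N 1 = 1 := by
  rw [tailP_of_le hN, sum_range_succ_rfun, sum_range_zero, add_zero, inv_one]

lemma tailP_succ_le (hρ : 0 ≤ ρ) (hk : 1 ≤ k) : tailP ρ N (k + 1) ≤ tailP ρ N k := by
  rcases le_or_gt (k + 1) N with hkN | hkN
  · obtain ⟨m, rfl⟩ : ∃ m, k = m + 1 := ⟨k - 1, by omega⟩
    rw [tailP_of_le hkN, tailP_of_le (by omega), sum_range_succ_rfun, sum_range_succ_rfun,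
      sum_range_succ]
    have := rfun_nonneg hρ N (m + 1)
    have := sum_nonneg fun i (_ : i ∈ range m) => rfun_nonneg hρ N (i + 1)
    exact inv_anti₀ (by linarith) (by linarith)
  · rw [tailP_of_lt hkN]
    exact tailP_nonneg hρ N k

lemma pmfP_nonneg (hρ : 0 ≤ ρ) (hk : 1 ≤ k) : 0 ≤ pmfP ρ N k :=
  sub_nonneg.2 (tailP_succ_le hρ hk)

lemma sum_pmfP_Icc {a b : ℕ} (hab : a ≤ b + 1) :
    ∑ k ∈ Icc a b, pmfP ρ N k = tailP ρ N a - tailP ρ N (b + 1) := by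
  rw [← Ico_add_one_right_eq_Icc]
  have hneg (k : ℕ) : pmfP ρ N k = -(tailP ρ N (k + 1) - tailP ρ N k) := (neg_sub _ _).symm
  rw [sum_congr rfl fun k _ => hneg k, sum_neg_distrib, sum_Ico_sub (tailP ρ N) hab, neg_sub]

lemma sum_pmfP_Icc_eq_tailP (ρ : ℝ) (N k : ℕ) : ∑ j ∈ Icc k N, pmfP ρ N j = tailP ρ N k := by
  by_cases hk : k ≤ N + 1
  · rw [sum_pmfP_Icc hk, tailP_of_lt (lt_add_one N), sub_zero]
  · rw [Icc_eq_empty (by omega), sum_empty, tailP_of_lt (by omega)]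

lemma sum_pmfP_Icc_one_le (hρ : 0 ≤ ρ) {M : ℕ} (hM : M < N) :
    ∑ k ∈ Icc 1 M, pmfP ρ N k ≤ ∑ i ∈ range M, rfun ρ N (i + 1) := by
  rw [sum_pmfP_Icc (by omega), tailP_one (by omega), tailP_of_le hM, sum_range_succ_rfun]
  have hs := sum_nonneg fun i (_ : i ∈ range M) => rfun_nonneg hρ N (i + 1)
  set s := ∑ i ∈ range M, rfun ρ N (i + 1)
  field_simp
  nlinarith

lemma tailP_le_exp (hρ : 0 < ρ) (hjk : j < k) (hk : k ≤ n + 1) :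
    tailP ρ (n + 1) k ≤ exp (n * tiltedBinEntropy ρ (j / n)) := by
  have hr := exp_neg_le_rfun hρ (n := n) (j := j) (by omega)
  rw [tailP_of_le hk, ← inv_inv (exp _), ← exp_neg]
  exact inv_anti₀ (exp_pos _)
    (hr.trans (single_le_sum (fun i _ => rfun_nonneg hρ.le _ i) (mem_range.2 hjk)))

lemma sum_range_rfun_le_of_le_floor (hρ : 0 < ρ) {δ : ℝ} (hδ₀ : 0 ≤ δ) (hδ : 4 * δ ≤ min ρ 1)
    {m : ℕ} (hm : m ≤ ⌊δ * n⌋₊) : ∑ i ∈ range m, rfun ρ (n + 1) (i + 1) ≤ 2 * (ρ * n)⁻¹ := by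
  calc ∑ i ∈ range m, rfun ρ (n + 1) (i + 1)
      ≤ 2 * rfun ρ (n + 1) (0 + 1) :=
        sum_range_le_two_mul_of_le_half (fun i => rfun_nonneg hρ.le _ _) fun i hi => ?_
    _ = 2 * (ρ * n)⁻¹ := by simp [rfun_succ]
  have hi' : ((i + 2 : ℕ) : ℝ) ≤ δ * n :=
    (Nat.le_floor_iff (by positivity)).1 (by omega)
  push_cast at hi'
  have hδn : 4 * (δ * n) ≤ ρ * n := by nlinarith [min_le_left ρ 1]
  have hρδn : ρ * (δ * n) ≤ ρ * n / 4 := by nlinarith [min_le_right ρ 1]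
  have hρi : ρ * (i + 1) ≤ ρ * (δ * n) := mul_le_mul_of_nonneg_left (by linarith) hρ.le
  apply rfun_succ_le_half hρ
  push_cast
  nlinarith

lemma rfun_le_of_le_tiltedBinEntropy (hρ : 0 < ρ) (hj : j ≤ n) {c : ℝ}
    (hc : c ≤ tiltedBinEntropy ρ (j / n)) : rfun ρ (n + 1) j ≤ (n + 1) * exp (-(c * n)) := by
  refine (rfun_le_succ_mul_exp_neg hρ hj).trans ?_
  rw [mul_comm c]
  gcongr

lemma sum_Ico_rfun_le_of_le_tiltedBinEntropy (hρ : 0 < ρ) {δ a c : ℝ} (hδ : 0 ≤ δ) (ha : 0 < a)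
    (ha₁ : a ≤ 1) (hc : ∀ x ∈ Set.Icc δ a, c ≤ tiltedBinEntropy ρ x) :
    ∑ i ∈ Ico ⌊δ * n⌋₊ ⌊a * n⌋₊, rfun ρ (n + 1) (i + 1) ≤ n * ((n + 1) * exp (-(c * n))) := by
  have hM : (⌊a * n⌋₊ : ℝ) ≤ a * n := Nat.floor_le (by positivity)
  calc ∑ i ∈ Ico ⌊δ * n⌋₊ ⌊a * n⌋₊, rfun ρ (n + 1) (i + 1)
      ≤ #(Ico ⌊δ * n⌋₊ ⌊a * n⌋₊) • ((n + 1) * exp (-(c * n))) :=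
        sum_le_card_nsmul _ _ _ fun i hi => ?_
    _ ≤ n * ((n + 1) * exp (-(c * n))) := by
        rw [nsmul_eq_mul, Nat.card_Ico]
        gcongr
        exact (Nat.sub_le _ _).trans (Nat.floor_le_of_le (mul_le_of_le_one_left n.cast_nonneg ha₁))
  obtain ⟨hi₁, hi₂⟩ := mem_Ico.1 hi
  have hlo : δ * n < ((i + 1 : ℕ) : ℝ) := (Nat.floor_lt (by positivity)).1 (by omega)
  have hhi : ((i + 1 : ℕ) : ℝ) ≤ a * n := (Nat.cast_le.2 hi₂).trans hM
  have hn : (0 : ℝ) < n :=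
    pos_of_mul_pos_right ((by positivity : (0 : ℝ) < (i + 1 : ℕ)).trans_le hhi) ha.le
  have hin : i + 1 ≤ n := by
    have : ((i + 1 : ℕ) : ℝ) ≤ n := hhi.trans (mul_le_of_le_one_left hn.le ha₁)
    exact_mod_cast this
  refine rfun_le_of_le_tiltedBinEntropy hρ hin (hc _ ⟨?_, ?_⟩)
  · rw [le_div_iff₀ hn]; exact hlo.le
  · rw [div_le_iff₀ hn]; exact hhi

lemma tendsto_sum_rfun_floor (hρ : 0 < ρ) (hα : α ∈ Set.Ioo 0 1)
    (hT : tiltedBinEntropy ρ α = 0) {a : ℝ} (ha : 0 < a) (haα : a < α) :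
    Tendsto (fun n : ℕ => ∑ i ∈ range ⌊a * n⌋₊, rfun ρ (n + 1) (i + 1)) atTop (𝓝 0) := by
  set δ := min (min ρ 1 / 4) a
  have hδ₀ : 0 < δ := lt_min (by positivity) ha
  have hδa : δ ≤ a := min_le_right _ _
  have hδρ : 4 * δ ≤ min ρ 1 := by linarith [min_le_left (min ρ 1 / 4) a]
  have ha₁ : a ≤ 1 := by linarith [hα.2]
  set c := min (tiltedBinEntropy ρ δ) (tiltedBinEntropy ρ a)
  have hc : 0 < c := lt_min (tiltedBinEntropy_pos hα hT hδ₀ (hδa.trans_lt haα))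
    (tiltedBinEntropy_pos hα hT ha haα)
  have hcδa (x : ℝ) (hx : x ∈ Set.Icc δ a) : c ≤ tiltedBinEntropy ρ x :=
    (strictConcaveOn_tiltedBinEntropy ρ).concaveOn.min_le_of_mem_Icc
      ⟨hδ₀.le, hδa.trans ha₁⟩ ⟨ha.le, ha₁⟩ hx
  have hbound (n : ℕ) : ∑ i ∈ range ⌊a * n⌋₊, rfun ρ (n + 1) (i + 1)
      ≤ 2 * (ρ * n)⁻¹ + n * ((n + 1) * exp (-(c * n))) := by
    have hIco : Ico (min ⌊a * n⌋₊ ⌊δ * n⌋₊) ⌊a * n⌋₊ = Ico ⌊δ * n⌋₊ ⌊a * n⌋₊ := by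
      ext; simp only [mem_Ico]; omega
    rw [← sum_range_add_sum_Ico _ (min_le_left _ ⌊δ * n⌋₊), hIco]
    exact add_le_add (sum_range_rfun_le_of_le_floor hρ hδ₀.le hδρ (min_le_right _ _))
      (sum_Ico_rfun_le_of_le_tiltedBinEntropy hρ hδ₀.le ha ha₁ hcδa)
  refine squeeze_zero (fun n => sum_nonneg fun i _ => rfun_nonneg hρ.le _ _) hbound ?_
  simpa using ((tendsto_inv_atTop_zero.comp
    (tendsto_natCast_atTop_atTop.const_mul_atTop hρ)).const_mul 2).add
    (tendsto_mul_succ_mul_exp_neg hc)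

lemma tendsto_sum_pmfP_Icc_one (hρ : 0 < ρ) (hα : α ∈ Set.Ioo 0 1)
    (hT : tiltedBinEntropy ρ α = 0) {a : ℝ} (ha : 0 < a) (haα : a < α) {M : ℕ → ℕ}
    (hM : ∀ᶠ n in atTop, M n ≤ ⌊a * n⌋₊) :
    Tendsto (fun n : ℕ => ∑ k ∈ Icc 1 (M n), pmfP ρ (n + 1) k) atTop (𝓝 0) := by
  refine squeeze_zero'
    (.of_forall fun n => sum_nonneg fun k hk => pmfP_nonneg hρ.le (mem_Icc.1 hk).1) ?_
    (tendsto_sum_rfun_floor hρ hα hT ha haα)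
  filter_upwards [hM] with n hn
  have hfl : ⌊a * n⌋₊ ≤ n :=
    Nat.floor_le_of_le (mul_le_of_le_one_left n.cast_nonneg (by linarith [hα.2]))
  calc ∑ k ∈ Icc 1 (M n), pmfP ρ (n + 1) k ≤ ∑ i ∈ range (M n), rfun ρ (n + 1) (i + 1) :=
        sum_pmfP_Icc_one_le hρ.le (by omega)
    _ ≤ ∑ i ∈ range ⌊a * n⌋₊, rfun ρ (n + 1) (i + 1) :=
        sum_le_sum_of_subset_of_nonneg (range_subset_range.2 hn) fun i _ _ => rfun_nonneg hρ.le _ _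

lemma tendsto_tailP (hρ : 0 < ρ) (hα : α ∈ Set.Ioo 0 1) (hT : tiltedBinEntropy ρ α = 0) {b : ℝ}
    (hb : α < b) {K : ℕ → ℕ} (hK : ∀ᶠ n in atTop, b * n + 1 ≤ K n) :
    Tendsto (fun n : ℕ => tailP ρ (n + 1) (K n)) atTop (𝓝 0) := by
  set b' := min b 1
  have hb' : b' ∈ Set.Icc α 1 := ⟨le_min hb.le hα.2.le, min_le_right _ _⟩
  have hc : tiltedBinEntropy ρ b' < 0 :=
    hT ▸ strictAntiOn_tiltedBinEntropy hα hT ⟨le_rfl, hα.2.le⟩ hb' (lt_min hb hα.2)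
  refine squeeze_zero' (.of_forall fun n => tailP_nonneg hρ.le _ _) ?_
    (tendsto_pow_atTop_nhds_zero_of_lt_one (exp_pos _).le (exp_lt_one_iff.2 hc))
  filter_upwards [hK, eventually_gt_atTop 0] with n hKn hn
  rcases le_or_gt (K n) (n + 1) with hKN | hKN
  · have hn' : (0 : ℝ) < n := by exact_mod_cast hn
    have hK1 : 1 ≤ K n := by
      have : (1 : ℝ) ≤ K n := by nlinarith [hα.1]
      exact_mod_cast this
    have hj : b' ≤ ((K n - 1 : ℕ) : ℝ) / n := by
      rw [le_div_iff₀ hn', Nat.cast_sub hK1, Nat.cast_one]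
      nlinarith [min_le_left b 1]
    have hj1 : ((K n - 1 : ℕ) : ℝ) / n ≤ 1 :=
      div_le_one_of_le₀ (by exact_mod_cast (by omega : K n - 1 ≤ n)) hn'.le
    calc tailP ρ (n + 1) (K n) ≤ exp (n * tiltedBinEntropy ρ ((K n - 1 : ℕ) / n)) :=
          tailP_le_exp hρ (by omega) hKN
      _ ≤ exp (n * tiltedBinEntropy ρ b') := by
          gcongr
          exact (strictAntiOn_tiltedBinEntropy hα hT).antitoneOn hb' ⟨hb'.1.trans hj, hj1⟩ hj
      _ = exp (tiltedBinEntropy ρ b') ^ n := exp_nat_mul _ _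
  · rw [tailP_of_lt hKN]
    positivity

lemma sum_filter_pmfP_le (hρ : 0 ≤ ρ) {ε : ℝ} (hN : 0 < (α + ε) * N) :
    ∑ k ∈ (Icc 1 N).filter (fun k : ℕ => ε ≤ |(k : ℝ) / N - α|), pmfP ρ N k
      ≤ ∑ k ∈ Icc 1 ⌊(α - ε) * N⌋₊, pmfP ρ N k + ∑ k ∈ Icc ⌈(α + ε) * N⌉₊ N, pmfP ρ N k := by
  rw [← sum_filter_add_sum_filter_not _ (fun k : ℕ => (k : ℝ) / N < α)]
  -- `pmfP ρ N 0 = -1`, so the upper range must not contain `0`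
  have hK : 1 ≤ ⌈(α + ε) * N⌉₊ := Nat.one_le_ceil_iff.2 hN
  refine add_le_add
    (sum_le_sum_of_subset_of_nonneg ?_ fun k hk _ => pmfP_nonneg hρ (mem_Icc.1 hk).1)
    (sum_le_sum_of_subset_of_nonneg ?_ fun k hk _ => pmfP_nonneg hρ (hK.trans (mem_Icc.1 hk).1))
  all_goals
    intro k hk
    simp only [mem_filter, mem_Icc] at hk ⊢
    obtain ⟨⟨⟨hk1, hkN⟩, hε⟩, hα⟩ := hk
    have hN' : (0 : ℝ) < N := by exact_mod_cast (hk1.trans hkN)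
  · rw [abs_of_neg (sub_neg.2 hα)] at hε
    exact ⟨hk1, Nat.le_floor (by rw [← div_le_iff₀ hN']; linarith)⟩
  · rw [abs_of_nonneg (sub_nonneg.2 (not_lt.1 hα))] at hε
    exact ⟨Nat.ceil_le.2 (by rw [← le_div_iff₀ hN']; linarith), hkN⟩

end Height

theorem height_lln_rho_lt_one_general (ρ α : ℝ) (hρ0 : 0 < ρ)
    (hα : α ∈ Set.Ioo (0 : ℝ) 1)
    (hsol : α ^ α * (1 - α) ^ (1 - α) = ρ ^ α) :
    ∀ ε > (0 : ℝ),
      Tendsto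
        (fun N : ℕ =>
          ∑ k ∈ (Finset.Icc 1 N).filter (fun k : ℕ => ε ≤ |(k : ℝ) / N - α|), pmfP ρ N k)
        atTop (𝓝 0) := by
  intro ε hε
  have hT := tiltedBinEntropy_eq_zero_of_rpow hρ0 hα hsol
  have hlarge : ∀ᶠ n : ℕ in atTop, 1 ≤ ε / 2 * n :=
    (tendsto_natCast_atTop_atTop.const_mul_atTop (half_pos hε)).eventually_ge_atTop 1
  set a := max (α - ε / 2) (α / 2)
  have hM : ∀ᶠ n : ℕ in atTop, ⌊(α - ε) * (n + 1 : ℕ)⌋₊ ≤ ⌊a * n⌋₊ := hlarge.mono fun n hn => by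
    have := mul_le_mul_of_nonneg_right (le_max_left (α - ε / 2) (α / 2)) n.cast_nonneg
    exact Nat.floor_le_floor (by push_cast; linarith [hα.2])
  have hK : ∀ᶠ n : ℕ in atTop, (α + ε / 2) * n + 1 ≤ ⌈(α + ε) * (n + 1 : ℕ)⌉₊ :=
    hlarge.mono fun n hn => le_trans (by push_cast; linarith [hα.1]) (Nat.le_ceil _)
  have hlow := tendsto_sum_pmfP_Icc_one hρ0 hα hT (lt_max_of_lt_right (half_pos hα.1))
    (max_lt (by linarith) (half_lt_self hα.1)) hM
  have hup := tendsto_tailP hρ0 hα hT (by linarith) hK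
  rw [← tendsto_add_atTop_iff_nat 1]
  refine squeeze_zero
    (fun n => sum_nonneg fun k hk => pmfP_nonneg hρ0.le (mem_Icc.1 (mem_filter.1 hk).1).1)
    (fun n => ?_) (by simpa only [add_zero] using hlow.add hup)
  rw [← sum_pmfP_Icc_eq_tailP]
  exact sum_filter_pmfP_le (α := α) (ε := ε) (N := n + 1) hρ0.le
    (mul_pos (by linarith [hα.1]) (by positivity))

theorem height_lln_rho_lt_one (ρ α : ℝ) (hρ0 : 0 < ρ) (hρ1 : ρ < 1)
    (hα : α ∈ Set.Ioo (0 : ℝ) 1)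
    (hsol : α ^ α * (1 - α) ^ (1 - α) = ρ ^ α)
    (huniq : ∀ x ∈ Set.Ioo (0 : ℝ) 1, x ^ x * (1 - x) ^ (1 - x) = ρ ^ x → x = α) :
    ∀ ε > (0 : ℝ),
      Tendsto
        (fun N : ℕ =>
          ∑ k ∈ (Finset.Icc 1 N).filter (fun k : ℕ => ε ≤ |(k : ℝ) / N - α|), pmfP ρ N k)
        atTop (𝓝 0) :=
  height_lln_rho_lt_one_general ρ α hρ0 hα hsol
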